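/- Let V be a finite-dimensional k-vector space of dimension at least 2 and let W be a linear subspace of the space of alternating bilinear forms on V. Then the following are equivalent: (i) for every nonzero v ∈ V, the subspace {B(v, ·) : B ∈ W} of the dual space V^∨ equals {φ ∈ V^∨ : φ(v) = 0}; (ii) there is no pair of linearly independent vectors v, w ∈ V such that B(v, w) = 0 for all B ∈ W. (This is the linear-algebra content of Lemma 1.8: a subspace W ⊆ Λ²(V^∨) generates the sheaf Ω¹_{P(V)}(2) globally if and only if W^⊥ ⊆ Λ²V contains no decomposable element.) -/

import Mathlib

/-- Linear-algebra content of Lemma 1.8. Let `V` be a finite-dimensional vector space of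
dimension at least `2` over an algebraically closed field `k` of characteristic zero, and
let `W` be a subspace of the space of alternating bilinear forms on `V`. Then: for every
nonzero `v ∈ V`, the subspace `{B(v, ·) : B ∈ W}` of `V^∨` equals `{φ : φ(v) = 0}`, if and
only if there is no pair of linearly independent vectors `v, w` with `B(v, w) = 0` for all
`B ∈ W`. -/
theorem stmt1 (k : Type*) [Field k] [IsAlgClosed k] [CharZero k]
    (V : Type*) [AddCommGroup V] [Module k V] [FiniteDimensional k V]
    (hV : 2 ≤ Module.finrank k V)
    (W : Submodule k (V →ₗ[k] V →ₗ[k] k))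
    (hAlt : ∀ B ∈ W, ∀ v : V, B v v = 0) :
    (∀ v : V, v ≠ 0 →
        {f : V →ₗ[k] k | ∃ B ∈ W, B v = f} = {φ : V →ₗ[k] k | φ v = 0}) ↔
      ¬ ∃ v w : V, LinearIndependent k ![v, w] ∧ ∀ B ∈ W, B v w = 0 := by
  constructor
  · rintro h ⟨v, w, hli, hB⟩
    have hv : v ≠ 0 := by simpa using hli.ne_zero 0
    have hw : w ∉ Submodule.span k {v} := by
      intro hmem
      obtain ⟨a, ha⟩ := Submodule.mem_span_singleton.mp hmem
      exact ((LinearIndependent.pair_iff' hv).mp hli) a ha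
    -- get a functional vanishing on v but not on w
    rw [← Subspace.forall_mem_dualAnnihilator_apply_eq_zero_iff (Submodule.span k {v}) w] at hw
    push_neg at hw
    obtain ⟨φ, hφann, hφw⟩ := hw
    have hφv : φ v = 0 :=
      (Submodule.mem_dualAnnihilator φ).mp hφann v (Submodule.mem_span_singleton_self v)
    have : φ ∈ {φ : V →ₗ[k] k | φ v = 0} := hφv
    rw [← h v hv] at this
    obtain ⟨B, hBW, hBv⟩ := this
    exact hφw (by rw [← hBv]; exact hB B hBW)
  · intro h v hv
    -- the image subspace
    set S : Submodule k (V →ₗ[k] k) := W.map (LinearMap.applyₗ v) with hS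
    have hSsub : ∀ f, f ∈ S ↔ ∃ B ∈ W, B v = f := by
      intro f
      simp [hS, LinearMap.applyₗ]
      rfl
    -- key: the coannihilator of S is contained in span {v}
    have hkey : S.dualCoannihilator ≤ Submodule.span k {v} := by
      intro w hwmem
      rw [Submodule.mem_dualCoannihilator] at hwmem
      by_contra hns
      have hBw : ∀ B ∈ W, B v w = 0 := by
        intro B hBW
        exact hwmem (B v) ((hSsub (B v)).mpr ⟨B, hBW, rfl⟩)
      have hwa : ∀ a : k, a • v ≠ w := by
        intro a ha
        exact hns (ha ▸ Submodule.smul_mem _ a (Submodule.mem_span_singleton_self v))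
      exact h ⟨v, w, (LinearIndependent.pair_iff' hv).mpr hwa, hBw⟩
    have hle : (Submodule.span k {v}).dualAnnihilator ≤ S := by
      have := Submodule.dualAnnihilator_anti hkey
      rwa [Subspace.dualCoannihilator_dualAnnihilator_eq] at this
    ext φ
    simp only [Set.mem_setOf_eq]
    constructor
    · rintro ⟨B, hBW, hBv⟩
      rw [← hBv]; exact hAlt B hBW v
    · intro hφv
      apply (hSsub φ).mp
      apply hle
      rw [Submodule.mem_dualAnnihilator]
      intro x hx
      obtain ⟨a, rfl⟩ := Submodule.mem_span_singleton.mp hx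
      simp [hφv]
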